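/- (Corollary: small initial velocities, α = 1.) Consider an HL-flock with random interactions satisfying Condition (K) with p ∈ (0,1] and α = 1. If v0 < p/(2(k−1)), then almost surely the flock flocks: ‖v[t]‖∞ → 0 and x[t] converges to a (random) limit in ℝ^{3k} as t → ∞. -/

import Mathlib

open MeasureTheory Finset Filter
open scoped ENNReal NNReal

lemma flock_decay_lemma (A β γ D E : ℝ) (e : ℕ → ℝ)
    (hA : 1 ≤ A) (hβA : β ≤ A) (hγ2 : 2 ≤ γ) (hD : 0 ≤ D) (hE0 : 0 ≤ E)
    (hDE : D ≤ (β - γ + 1) * E)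
    (he0 : e 0 ≤ E * A ^ (-(γ - 1)))
    (hstep : ∀ t : ℕ, e (t + 1) ≤ (1 - β / ((t : ℝ) + A)) * e t + D * ((t : ℝ) + A) ^ (-γ)) :
    ∀ t, e t ≤ E * ((t : ℝ) + A) ^ (-(γ - 1)) := by
  intro t
  induction t with
  | zero => simpa using he0
  | succ t ih =>
    have hA0 : (0:ℝ) < (t : ℝ) + A := by positivity
    have hA1 : (1:ℝ) ≤ (t : ℝ) + A := by
      have : (0:ℝ) ≤ (t:ℝ) := Nat.cast_nonneg t
      linarith
    have hu0 : (0:ℝ) < (t : ℝ) + 1 + A := by positivity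
    have hcoef : 0 ≤ 1 - β / ((t : ℝ) + A) := by
      rw [sub_nonneg, div_le_one hA0]
      have : (0:ℝ) ≤ (t:ℝ) := Nat.cast_nonneg t
      linarith
    -- step 1: bound e (t+1) using ih
    have h1 : e (t + 1) ≤ (1 - β / ((t : ℝ) + A)) * (E * ((t : ℝ) + A) ^ (-(γ - 1)))
        + D * ((t : ℝ) + A) ^ (-γ) :=
      (hstep t).trans (by
        gcongr)
    -- Bernoulli: ((t+A)/(t+1+A))^(γ-1) ≥ 1 - (γ-1)/(t+A)
    have hbern : 1 - (γ - 1) / ((t : ℝ) + A) ≤ (((t : ℝ) + A) / ((t : ℝ) + 1 + A)) ^ (γ - 1) := by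
      have hs : (-1 : ℝ) ≤ -(1 / ((t : ℝ) + 1 + A)) := by
        rw [neg_le_neg_iff]
        rw [div_le_one hu0]
        linarith
      have hp : (1:ℝ) ≤ γ - 1 := by linarith
      have := one_add_mul_self_le_rpow_one_add hs hp
      have heq : (1 : ℝ) + -(1 / ((t : ℝ) + 1 + A)) = ((t : ℝ) + A) / ((t : ℝ) + 1 + A) := by
        field_simp
        ring
      rw [heq] at this
      refine le_trans ?_ this
      have h2 : (γ - 1) / ((t : ℝ) + 1 + A) ≤ (γ - 1) / ((t : ℝ) + A) := by
        apply div_le_div_of_nonneg_left (by linarith) hA0 (by linarith)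
      have : (γ - 1) * -(1 / ((t : ℝ) + 1 + A)) = -((γ - 1) / ((t : ℝ) + 1 + A)) := by ring
      rw [this]
      linarith
    -- rewrite (t+1+A)^(-(γ-1))
    have hsplit : ((t : ℝ) + 1 + A) ^ (-(γ - 1))
        = ((t : ℝ) + A) ^ (-(γ - 1)) * (((t : ℝ) + A) / ((t : ℝ) + 1 + A)) ^ (γ - 1) := by
      rw [Real.div_rpow hA0.le hu0.le, Real.rpow_neg hA0.le, Real.rpow_neg hu0.le]
      field_simp
    have hmain : (1 - β / ((t : ℝ) + A)) * (E * ((t : ℝ) + A) ^ (-(γ - 1)))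
        + D * ((t : ℝ) + A) ^ (-γ) ≤ E * ((t : ℝ) + 1 + A) ^ (-(γ - 1)) := by
      rw [hsplit]
      have hr : E * (((t : ℝ) + A) ^ (-(γ - 1)) * (((t : ℝ) + A) / ((t : ℝ) + 1 + A)) ^ (γ - 1))
          ≥ E * (((t : ℝ) + A) ^ (-(γ - 1)) * (1 - (γ - 1) / ((t : ℝ) + A))) := by
        apply mul_le_mul_of_nonneg_left _ hE0
        apply mul_le_mul_of_nonneg_left hbern (Real.rpow_nonneg hA0.le _)
      refine le_trans ?_ hr
      -- suffices: (1 - β/(t+A)) E P + D (t+A)^(-γ) ≤ E P (1 - (γ-1)/(t+A))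
      -- i.e. D (t+A)^(-γ) ≤ E P (β - γ + 1)/(t+A), where P = (t+A)^(-(γ-1))
      have hPγ : ((t : ℝ) + A) ^ (-(γ - 1)) / ((t : ℝ) + A) = ((t : ℝ) + A) ^ (-γ) := by
        rw [div_eq_mul_inv, ← Real.rpow_neg_one ((t:ℝ)+A), ← Real.rpow_add hA0]
        ring_nf
      have hkey : D * ((t : ℝ) + A) ^ (-γ)
          ≤ (β - γ + 1) * E * ((t : ℝ) + A) ^ (-γ) := by
        apply mul_le_mul_of_nonneg_right hDE (Real.rpow_nonneg hA0.le _)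
      have hexp : E * (((t : ℝ) + A) ^ (-(γ - 1)) * (1 - (γ - 1) / ((t : ℝ) + A)))
          - (1 - β / ((t : ℝ) + A)) * (E * ((t : ℝ) + A) ^ (-(γ - 1)))
          = (β - γ + 1) * E * (((t : ℝ) + A) ^ (-(γ - 1)) / ((t : ℝ) + A)) := by
        field_simp
        ring
      nlinarith [hexp, hkey, hPγ]
    have : e (t + 1) ≤ E * ((t : ℝ) + 1 + A) ^ (-(γ - 1)) := h1.trans hmain
    convert this using 3
    push_cast
    ring

lemma flock_integral_mul_cond {Ω : Type*} [m0 : MeasurableSpace Ω]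
    (μ : Measure Ω) [IsProbabilityMeasure μ]
    (m : MeasurableSpace Ω) (hm : m ≤ m0) (a Y : Ω → ℝ) (lam c : ℝ)
    (hameas : Measurable[m0] a) (ha0 : ∀ ω, 0 ≤ a ω) (ha1 : ∀ ω, a ω ≤ 1)
    (hYmeas : Measurable[m] Y) (hY0 : ∀ ω, 0 ≤ Y ω) (hYbd : ∀ ω, Y ω ≤ c)
    (hlam : ∀ᵐ ω ∂μ, lam ≤ (μ[a|m]) ω) :
    lam * ∫ ω, Y ω ∂μ ≤ ∫ ω, a ω * Y ω ∂μ := by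
  have hYm0 : Measurable[m0] Y := hYmeas.mono hm le_rfl
  have hYint : Integrable Y μ := by
    apply (integrable_const (max c 0)).mono' hYm0.aestronglyMeasurable
    filter_upwards with ω
    rw [Real.norm_of_nonneg (hY0 ω)]
    exact le_trans (hYbd ω) (le_max_left _ _)
  have haint : Integrable a μ := by
    apply (integrable_const (1:ℝ)).mono' hameas.aestronglyMeasurable
    filter_upwards with ω
    rw [Real.norm_of_nonneg (ha0 ω)]
    exact ha1 ω
  have haY : Integrable (Y * a) μ := by
    apply haint.bdd_mul (c := max c 0) hYm0.aestronglyMeasurable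
    refine Eventually.of_forall (fun ω => ?_)
    rw [Real.norm_of_nonneg (hY0 ω)]
    exact le_trans (hYbd ω) (le_max_left _ _)
  have h2 : μ[Y * a|m] =ᵐ[μ] Y * μ[a|m] :=
    condExp_mul_of_stronglyMeasurable_left hYmeas.stronglyMeasurable haY haint
  have hcint : Integrable (Y * μ[a|m]) μ := by
    apply (integrable_condExp).bdd_mul (c := max c 0) hYm0.aestronglyMeasurable
    refine Eventually.of_forall (fun ω => ?_)
    rw [Real.norm_of_nonneg (hY0 ω)]
    exact le_trans (hYbd ω) (le_max_left _ _)
  have h4 : ∫ ω, lam * Y ω ∂μ ≤ ∫ ω, (Y * μ[a|m]) ω ∂μ := by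
    apply integral_mono_ae (hYint.const_mul lam) hcint
    filter_upwards [hlam] with ω hω
    have : lam * Y ω = Y ω * lam := mul_comm _ _
    rw [this]
    exact mul_le_mul_of_nonneg_left hω (hY0 ω)
  have h5 : ∫ ω, (Y * μ[a|m]) ω ∂μ = ∫ ω, (Y * a) ω ∂μ := by
    have e1 : ∫ ω, (μ[Y * a|m]) ω ∂μ = ∫ ω, (Y * a) ω ∂μ := integral_condExp hm
    have e2 : ∫ ω, (μ[Y * a|m]) ω ∂μ = ∫ ω, (Y * μ[a|m]) ω ∂μ := integral_congr_ae h2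
    exact e2.symm.trans e1
  have h6 : ∫ ω, lam * Y ω ∂μ = lam * ∫ ω, Y ω ∂μ := integral_const_mul lam Y
  calc lam * ∫ ω, Y ω ∂μ = ∫ ω, lam * Y ω ∂μ := h6.symm
    _ ≤ ∫ ω, (Y * μ[a|m]) ω ∂μ := h4
    _ = ∫ ω, (Y * a) ω ∂μ := h5
    _ = ∫ ω, a ω * Y ω ∂μ := by
        apply integral_congr_ae
        filter_upwards with ω
        exact mul_comm _ _

set_option maxHeartbeats 3200000 in
/-- Corollary (small initial velocities, `α = 1`): an HL-flock with random
interactions satisfying Condition (K) with `p ∈ (0,1]` and `α = 1`, such that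
`v0 = ‖v[0]‖∞ < p/(2(k−1))`, almost surely flocks. -/
theorem flocking_small_initial_velocities_alpha_eq_one
    (k : ℕ) (hk : 2 ≤ k)
    (Ω : Type*) [m0 : MeasurableSpace Ω]
    (μ : Measure Ω) [IsProbabilityMeasure μ]
    (F : ℕ → MeasurableSpace Ω)
    (hFle : ∀ t, F t ≤ m0) (hFmono : Monotone F)
    (x v : ℕ → Ω → Fin k → EuclideanSpace ℝ (Fin 3))
    (L : Fin k → Finset (Fin k))
    (a : ℕ → Ω → Fin k → Fin k → ℝ)
    (h : ℝ) (hh0 : 0 < h) (hh1 : h ≤ 1 / ((k : ℝ) - 1))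
    (hLlt : ∀ i : Fin k, ∀ j ∈ L i, j < i)
    (hLne : ∀ i : Fin k, 0 < i.val → (L i).Nonempty)
    (ha0 : ∀ t ω, ∀ i : Fin k, ∀ j ∈ L i, 0 ≤ a t ω i j)
    (ha1 : ∀ t ω, ∀ i : Fin k, ∀ j ∈ L i, a t ω i j ≤ 1)
    (hxmeas : ∀ t, Measurable[F t] (x t))
    (hvmeas : ∀ t, Measurable[F t] (v t))
    (hameas : ∀ t, ∀ i : Fin k, ∀ j ∈ L i, Measurable[F t] (fun ω => a t ω i j))
    (hxdyn : ∀ t ω i, x (t + 1) ω i = x t ω i + h • v t ω i)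
    (hvdyn : ∀ t ω i, v (t + 1) ω i =
      v t ω i + h • ∑ j ∈ L i, a (t + 1) ω i j • (v t ω j - v t ω i))
    (X0 V0 : Fin k → EuclideanSpace ℝ (Fin 3))
    (hX0 : ∀ ω, x 0 ω = X0) (hV0 : ∀ ω, v 0 ω = V0)
    (hX0z : X0 ⟨0, by omega⟩ = 0) (hV0z : V0 ⟨0, by omega⟩ = 0)
    (p : ℝ) (hp0 : 0 < p) (hp1 : p ≤ 1)
    (hK : ∀ t : ℕ, ∀ i : Fin k, ∀ j ∈ L i,
      ∀ᵐ ω ∂μ, p / (1 + ‖x t ω i - x t ω j‖) ≤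
        (μ[fun ω' => a (t + 1) ω' i j | F t]) ω)
    (hsmall : ‖V0‖ < p / (2 * ((k : ℝ) - 1))) :
    ∀ᵐ ω ∂μ,
      Tendsto (fun t : ℕ => ‖v t ω‖) atTop (nhds 0) ∧
      ∃ xhat : Fin k → EuclideanSpace ℝ (Fin 3),
        Tendsto (fun t : ℕ => x t ω) atTop (nhds xhat) := by
  classical
  set v0 : ℝ := ‖V0‖ with hv0def
  set x0 : ℝ := ‖X0‖ with hx0def
  have hv00 : 0 ≤ v0 := norm_nonneg _
  have hx00 : 0 ≤ x0 := norm_nonneg _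
  have hk1 : (1:ℝ) ≤ (k:ℝ) - 1 := by
    have : (2:ℝ) ≤ (k:ℝ) := by exact_mod_cast hk
    linarith
  have hh01 : h ≤ 1 := hh1.trans (by rw [div_le_one (by linarith)]; linarith)
  -- bird 0
  have hi0 : ∀ i : Fin k, i.val = 0 → ∀ j, j ∉ L i := by
    intro i hi j hj
    have := hLlt i j hj
    rw [Fin.lt_def, hi] at this
    omega
  have hv0bird : ∀ t ω, ∀ i : Fin k, i.val = 0 → v t ω i = 0 := by
    intro t
    induction t with
    | zero => intro ω i hi; rw [hV0 ω]
              have : i = ⟨0, by omega⟩ := by ext; simp [hi]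
              rw [this]; exact hV0z
    | succ t ih =>
      intro ω i hi
      rw [hvdyn t ω i]
      have hLe : L i = ∅ := eq_empty_of_forall_notMem (fun j => hi0 i hi j)
      rw [hLe]
      simp [ih ω i hi]
  -- coefficient sums
  have hcard : ∀ i : Fin k, ((L i).card : ℝ) ≤ (k:ℝ) - 1 := by
    intro i
    have h1 : L i ⊆ univ.erase i := by
      intro j hj
      exact mem_erase.2 ⟨Fin.ne_of_lt (hLlt i j hj), mem_univ j⟩
    have h2 : (L i).card ≤ (univ.erase i).card := card_le_card h1
    have h3 : (univ.erase i).card = k - 1 := by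
      rw [card_erase_of_mem (mem_univ i), card_univ, Fintype.card_fin]
    have h4 : (L i).card ≤ k - 1 := h3 ▸ h2
    have : ((k - 1 : ℕ) : ℝ) = (k:ℝ) - 1 := by
      have : 1 ≤ k := by omega
      push_cast [this]
      ring
    rw [← this]
    exact_mod_cast h4
  have hS : ∀ t ω, ∀ i : Fin k, 0 ≤ ∑ j ∈ L i, a t ω i j ∧ h * ∑ j ∈ L i, a t ω i j ≤ 1 := by
    intro t ω i
    constructor
    · exact sum_nonneg (fun j hj => ha0 t ω i j hj)
    · have h1 : ∑ j ∈ L i, a t ω i j ≤ ((L i).card : ℝ) := by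
        calc ∑ j ∈ L i, a t ω i j ≤ ∑ _j ∈ L i, (1:ℝ) :=
              sum_le_sum (fun j hj => ha1 t ω i j hj)
          _ = ((L i).card : ℝ) := by rw [sum_const, nsmul_eq_mul, mul_one]
      have h2 : ∑ j ∈ L i, a t ω i j ≤ (k:ℝ) - 1 := h1.trans (hcard i)
      have h3 : h * ((k:ℝ) - 1) ≤ 1 := by
        have hkpos : (0:ℝ) < (k:ℝ) - 1 := by linarith
        calc h * ((k:ℝ) - 1) ≤ (1 / ((k:ℝ) - 1)) * ((k:ℝ) - 1) :=
              mul_le_mul_of_nonneg_right hh1 hkpos.le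
          _ = 1 := by field_simp
      calc h * ∑ j ∈ L i, a t ω i j ≤ h * ((k:ℝ) - 1) :=
            mul_le_mul_of_nonneg_left h2 hh0.le
        _ ≤ 1 := h3
  -- pointwise norm recursion
  have hnorm_step : ∀ t ω, ∀ i : Fin k, ‖v (t+1) ω i‖ ≤
      (1 - h * ∑ j ∈ L i, a (t+1) ω i j) * ‖v t ω i‖
      + h * ∑ j ∈ L i, a (t+1) ω i j * ‖v t ω j‖ := by
    intro t ω i
    have hb1 : 0 ≤ 1 - h * ∑ j ∈ L i, a (t+1) ω i j := by
      have := (hS (t+1) ω i).2; linarith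
    have hexp : v (t+1) ω i = (1 - h * ∑ j ∈ L i, a (t+1) ω i j) • v t ω i
        + ∑ j ∈ L i, (h * a (t+1) ω i j) • v t ω j := by
      rw [hvdyn t ω i, Finset.smul_sum]
      simp_rw [smul_smul, smul_sub, Finset.sum_sub_distrib, ← Finset.sum_smul,
        ← Finset.mul_sum, sub_smul, one_smul]
      abel
    have hterm : ∀ j ∈ L i, ‖(h * a (t+1) ω i j) • v t ω j‖
        = a (t+1) ω i j * ‖v t ω j‖ * h := by
      intro j hj
      rw [norm_smul, Real.norm_of_nonneg (mul_nonneg hh0.le (ha0 _ _ _ _ hj))]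
      ring
    calc ‖v (t+1) ω i‖
        = ‖(1 - h * ∑ j ∈ L i, a (t+1) ω i j) • v t ω i
            + ∑ j ∈ L i, (h * a (t+1) ω i j) • v t ω j‖ := by rw [hexp]
      _ ≤ ‖(1 - h * ∑ j ∈ L i, a (t+1) ω i j) • v t ω i‖
            + ‖∑ j ∈ L i, (h * a (t+1) ω i j) • v t ω j‖ := norm_add_le _ _
      _ ≤ (1 - h * ∑ j ∈ L i, a (t+1) ω i j) * ‖v t ω i‖
            + ∑ j ∈ L i, ‖(h * a (t+1) ω i j) • v t ω j‖ := by
          apply add_le_add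
          · rw [norm_smul, Real.norm_of_nonneg hb1]
          · exact norm_sum_le _ _
      _ = (1 - h * ∑ j ∈ L i, a (t+1) ω i j) * ‖v t ω i‖
            + h * ∑ j ∈ L i, a (t+1) ω i j * ‖v t ω j‖ := by
          rw [Finset.sum_congr rfl hterm, ← Finset.sum_mul]
          ring
  -- uniform velocity bound
  have hvbd : ∀ t ω, ∀ i : Fin k, ‖v t ω i‖ ≤ v0 := by
    intro t
    induction t with
    | zero => intro ω i; rw [hV0 ω]; exact norm_le_pi_norm V0 i
    | succ t ih =>
      intro ω i
      have h1 := hnorm_step t ω i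
      have h2 : ∑ j ∈ L i, a (t+1) ω i j * ‖v t ω j‖
          ≤ (∑ j ∈ L i, a (t+1) ω i j) * v0 := by
        rw [Finset.sum_mul]
        exact sum_le_sum fun j hj =>
          mul_le_mul_of_nonneg_left (ih ω j) (ha0 _ _ _ _ hj)
      have hb1 : 0 ≤ 1 - h * ∑ j ∈ L i, a (t+1) ω i j := by
        have := (hS (t+1) ω i).2; linarith
      have h3 : (1 - h * ∑ j ∈ L i, a (t+1) ω i j) * ‖v t ω i‖
          ≤ (1 - h * ∑ j ∈ L i, a (t+1) ω i j) * v0 :=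
        mul_le_mul_of_nonneg_left (ih ω i) hb1
      have h4 : h * ∑ j ∈ L i, a (t+1) ω i j * ‖v t ω j‖
          ≤ h * ((∑ j ∈ L i, a (t+1) ω i j) * v0) :=
        mul_le_mul_of_nonneg_left h2 hh0.le
      nlinarith [h1, h3, h4]
  -- position bound
  have hxbd : ∀ t ω, ∀ i : Fin k, ‖x t ω i‖ ≤ x0 + t * (h * v0) := by
    intro t
    induction t with
    | zero => intro ω i; rw [hX0 ω]; simpa using norm_le_pi_norm X0 i
    | succ t ih =>
      intro ω i
      have h1 : ‖x (t+1) ω i‖ ≤ ‖x t ω i‖ + h * ‖v t ω i‖ := by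
        rw [hxdyn t ω i]
        refine (norm_add_le _ _).trans ?_
        rw [norm_smul, Real.norm_of_nonneg hh0.le]
      have h2 := hvbd t ω i
      have h3 := ih ω i
      have : ((t:ℝ)+1) * (h * v0) = (t:ℝ) * (h * v0) + h * v0 := by ring
      push_cast
      rw [this]
      nlinarith [h1]
  by_cases hV0zero : V0 = 0
  · -- trivial case: all velocities vanish identically
    refine Eventually.of_forall (fun ω => ?_)
    have hvz : ∀ t, v t ω = 0 := by
      intro t; funext i
      have hb := hvbd t ω i
      rw [hv0def, hV0zero, norm_zero] at hb
      have : v t ω i = 0 := norm_le_zero_iff.1 hb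
      simpa using this
    constructor
    · simp only [hvz, norm_zero]
      exact tendsto_const_nhds
    · refine ⟨X0, ?_⟩
      have hxz : ∀ t, x t ω = X0 := by
        intro t
        induction t with
        | zero => exact hX0 ω
        | succ t ih =>
          funext i
          rw [hxdyn t ω i, ih]
          have : v t ω i = 0 := by rw [hvz t]; rfl
          rw [this, smul_zero, add_zero]
      simp only [hxz]
      exact tendsto_const_nhds
  · have hv0pos : 0 < v0 := by rw [hv0def]; exact norm_pos_iff.2 hV0zero
    -- key constants
    set β : ℝ := p / (2 * v0) with hβdef
    set A : ℝ := (1 + 2 * x0) / (2 * (h * v0)) with hAdef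
    have h2hv0 : 0 < 2 * (h * v0) := by positivity
    have hsm' : 2 * ((k:ℝ) - 1) * v0 < p := by
      have h2k : (0:ℝ) < 2 * ((k:ℝ) - 1) := by linarith
      rw [lt_div_iff₀ h2k] at hsmall
      linarith
    have h2v0 : 2 * v0 < p := by
      have hkv : 0 ≤ ((k:ℝ) - 2) * v0 := mul_nonneg (by linarith) hv00
      linarith [hsm', hkv]
    have h2hv0le : 2 * (h * v0) < 1 := by
      have hhv : h * v0 ≤ v0 := mul_le_of_le_one_left hv00 hh01
      linarith
    have hA1 : 1 ≤ A := by
      rw [hAdef, le_div_iff₀ h2hv0]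
      linarith [hx00, h2hv0le]
    have hβA : β ≤ A := by
      rw [hβdef, hAdef, div_le_div_iff₀ (by positivity) h2hv0]
      have hhp1 : h * p ≤ 1 := by
        calc h * p ≤ 1 * 1 := mul_le_mul hh01 hp1 hp0.le zero_le_one
          _ = 1 := one_mul 1
      have t2 : (2*v0)*(h*p) ≤ (2*v0)*1 :=
        mul_le_mul_of_nonneg_left hhp1 (by positivity)
      have t4 : (0:ℝ) ≤ 4*(x0*v0) := by positivity
      linarith [t2, t4]
    have hβk : (k:ℝ) - 1 < β := by
      rw [hβdef, lt_div_iff₀ (by positivity)]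
      linarith [hsm']
    have hβ1 : 1 ≤ β := by linarith
    have hlam_eq : ∀ t : ℕ, h * (p / (1 + 2*x0 + 2*(h*v0)*t)) = β / ((t:ℝ) + A) := by
      intro t
      have hden : 0 < 1 + 2*x0 + 2*(h*v0)*t := by positivity
      rw [hβdef, hAdef]
      field_simp
      ring
    -- measurability and integrability
    have hvmeas0 : ∀ t, Measurable[m0] (v t) := fun t => (hvmeas t).mono (hFle t) le_rfl
    have hvnim : ∀ t (i : Fin k), Measurable[m0] (fun ω => ‖v t ω i‖) := fun t i =>
      ((measurable_pi_apply i).comp (hvmeas0 t)).norm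
    have hvint : ∀ t (i : Fin k), Integrable (fun ω => ‖v t ω i‖) μ := by
      intro t i
      apply (integrable_const v0).mono' (hvnim t i).aestronglyMeasurable
      filter_upwards with ω
      rw [norm_norm]
      exact hvbd t ω i
    set e : Fin k → ℕ → ℝ := fun i t => ∫ ω, ‖v t ω i‖ ∂μ with hedef
    have henn : ∀ (i : Fin k) t, 0 ≤ e i t := fun i t => integral_nonneg (fun ω => norm_nonneg _)
    have hebd : ∀ (i : Fin k) t, e i t ≤ v0 := by
      intro i t
      calc e i t ≤ ∫ _ω, v0 ∂μ :=
            integral_mono (hvint t i) (integrable_const v0) (fun ω => hvbd t ω i)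
        _ = v0 := by simp
    have hezero : ∀ t, ∀ i : Fin k, i.val = 0 → e i t = 0 := by
      intro t i hi
      show ∫ ω, ‖v t ω i‖ ∂μ = 0
      have : (fun ω => ‖v t ω i‖) = fun _ω => (0:ℝ) :=
        funext fun ω => by rw [hv0bird t ω i hi, norm_zero]
      rw [this]
      simp
    -- main recursion in expectation
    have hrec : ∀ i : Fin k, 0 < i.val → ∀ t : ℕ,
        e i (t+1) ≤ (1 - β / ((t:ℝ) + A)) * e i t + h * ∑ j ∈ L i, e j t := by
      intro i hi t
      obtain ⟨j0, hj0⟩ := hLne i hi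
      have ham0 : ∀ j ∈ L i, Measurable[m0] (fun ω => a (t+1) ω i j) :=
        fun j hj => (hameas (t+1) i j hj).mono (hFle (t+1)) le_rfl
      have hprod_int : ∀ j ∈ L i, ∀ j' : Fin k,
          Integrable (fun ω => a (t+1) ω i j * ‖v t ω j'‖) μ := by
        intro j hj j'
        have := (hvint t j').bdd_mul (c := 1) ((ham0 j hj).aestronglyMeasurable)
          (Eventually.of_forall fun ω => by
            rw [Real.norm_of_nonneg (ha0 (t+1) ω i j hj)]
            exact ha1 (t+1) ω i j hj)
        exact this
      set R : Ω → ℝ := fun ω => ‖v t ω i‖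
          + h * (∑ j ∈ L i, a (t+1) ω i j * ‖v t ω j‖)
          - h * (∑ j ∈ L i, a (t+1) ω i j * ‖v t ω i‖) with hRdef
      have hptw : ∀ ω, ‖v (t+1) ω i‖ ≤ R ω := by
        intro ω
        have h1 := hnorm_step t ω i
        have h2 : (∑ j ∈ L i, a (t+1) ω i j) * ‖v t ω i‖
            = ∑ j ∈ L i, a (t+1) ω i j * ‖v t ω i‖ := Finset.sum_mul _ _ _
        rw [hRdef]
        simp only
        nlinarith [h1, h2]
      have hRint : Integrable R μ := by
        apply Integrable.sub
        · apply Integrable.add (hvint t i)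
          exact (integrable_finset_sum _ (fun j hj => hprod_int j hj j)).const_mul h
        · exact (integrable_finset_sum _ (fun j hj => hprod_int j hj i)).const_mul h
      have hIR : e i (t+1) ≤ ∫ ω, R ω ∂μ :=
        integral_mono (hvint (t+1) i) hRint hptw
      have hIRval : ∫ ω, R ω ∂μ = e i t
          + h * (∑ j ∈ L i, ∫ ω, a (t+1) ω i j * ‖v t ω j‖ ∂μ)
          - h * (∑ j ∈ L i, ∫ ω, a (t+1) ω i j * ‖v t ω i‖ ∂μ) := by
        rw [hRdef]
        rw [integral_sub (by
              apply Integrable.add (hvint t i)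
              exact (integrable_finset_sum _ (fun j hj => hprod_int j hj j)).const_mul h)
            ((integrable_finset_sum _ (fun j hj => hprod_int j hj i)).const_mul h)]
        rw [integral_add (hvint t i)
            ((integrable_finset_sum _ (fun j hj => hprod_int j hj j)).const_mul h)]
        rw [integral_const_mul, integral_const_mul]
        rw [integral_finset_sum _ (fun j hj => hprod_int j hj j),
            integral_finset_sum _ (fun j hj => hprod_int j hj i)]
      have hup : ∑ j ∈ L i, ∫ ω, a (t+1) ω i j * ‖v t ω j‖ ∂μ ≤ ∑ j ∈ L i, e j t := by
        apply sum_le_sum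
        intro j hj
        apply integral_mono (hprod_int j hj j) (hvint t j)
        intro ω
        exact mul_le_of_le_one_left (norm_nonneg _) (ha1 (t+1) ω i j hj)
      set lam : ℝ := p / (1 + 2*x0 + 2*(h*v0)*t) with hlamdef
      have hYm1 : Measurable[F t] (fun ω => v t ω i) :=
        (measurable_pi_apply i).comp (hvmeas t)
      have hYm : Measurable[F t] (fun ω => ‖v t ω i‖) := measurable_norm.comp hYm1
      have hlow : lam * e i t ≤ ∫ ω, a (t+1) ω i j0 * ‖v t ω i‖ ∂μ := by
        apply flock_integral_mul_cond μ (F t) (hFle t) _ _ lam v0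
          (ham0 j0 hj0) (fun ω => ha0 (t+1) ω i j0 hj0) (fun ω => ha1 (t+1) ω i j0 hj0)
          hYm (fun ω => norm_nonneg _) (fun ω => hvbd t ω i)
        filter_upwards [hK t i j0 hj0] with ω hω
        refine le_trans ?_ hω
        have hd : ‖x t ω i - x t ω j0‖ ≤ 2*x0 + 2*(h*v0)*t := by
          calc ‖x t ω i - x t ω j0‖ ≤ ‖x t ω i‖ + ‖x t ω j0‖ := norm_sub_le _ _
            _ ≤ (x0 + t * (h*v0)) + (x0 + t * (h*v0)) :=
                add_le_add (hxbd t ω i) (hxbd t ω j0)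
            _ = 2*x0 + 2*(h*v0)*t := by ring
        rw [hlamdef]
        apply div_le_div_of_nonneg_left hp0.le (by positivity)
        linarith
      have hsumlow : lam * e i t ≤ ∑ j ∈ L i, ∫ ω, a (t+1) ω i j * ‖v t ω i‖ ∂μ := by
        refine hlow.trans (single_le_sum (f := fun j => ∫ ω, a (t+1) ω i j * ‖v t ω i‖ ∂μ) (fun j hj => ?_) hj0)
        exact integral_nonneg fun ω => mul_nonneg (ha0 (t+1) ω i j hj) (norm_nonneg _)
      have hβlam : β / ((t:ℝ) + A) = h * lam := (hlam_eq t).symm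
      rw [hβlam]
      have c1 : h * (∑ j ∈ L i, ∫ ω, a (t+1) ω i j * ‖v t ω j‖ ∂μ)
          ≤ h * ∑ j ∈ L i, e j t := mul_le_mul_of_nonneg_left hup hh0.le
      have c2 : h * (lam * e i t)
          ≤ h * (∑ j ∈ L i, ∫ ω, a (t+1) ω i j * ‖v t ω i‖ ∂μ) :=
        mul_le_mul_of_nonneg_left hsumlow hh0.le
      have : (1 - h * lam) * e i t = e i t - h * (lam * e i t) := by ring
      linarith [hIR, hIRval, c1, c2]
    -- strong induction over the hierarchy
    have hApos : (0:ℝ) < A := lt_of_lt_of_le one_pos hA1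
    have main : ∀ n : ℕ, ∃ C : ℝ, 0 ≤ C ∧ ∀ i : Fin k, 1 ≤ i.val → i.val ≤ n → ∀ t : ℕ,
        e i t ≤ C * (((t:ℝ) + A) ^ (-(β - (i.val:ℝ) + 1))) := by
      intro n
      induction n with
      | zero => exact ⟨0, le_rfl, fun i h1 h2 => by omega⟩
      | succ n ihn =>
        obtain ⟨C, hC0, hC⟩ := ihn
        set γ : ℝ := β - ((n:ℝ) + 1) + 2 with hγdef
        set D : ℝ := if n = 0 then 0 else h * C * k with hDdef
        set E : ℝ := v0 * A ^ (β - (n:ℝ)) + h * C * k with hEdef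
        have hE0 : 0 ≤ E := by
          rw [hEdef]
          have := mul_nonneg hv00 (Real.rpow_nonneg hApos.le (β - (n:ℝ)))
          have : (0:ℝ) ≤ h * C * k := by positivity
          linarith [mul_nonneg hv00 (Real.rpow_nonneg hApos.le (β - (n:ℝ)))]
        refine ⟨max C E, le_trans hC0 (le_max_left _ _), ?_⟩
        intro i h1 h2 t
        have htA0 : (0:ℝ) < (t:ℝ) + A := by
          have : (0:ℝ) ≤ (t:ℝ) := Nat.cast_nonneg t
          linarith
        have hrpnn : (0:ℝ) ≤ ((t:ℝ) + A) ^ (-(β - (i.val:ℝ) + 1)) :=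
          Real.rpow_nonneg htA0.le _
        rcases Nat.lt_or_ge i.val (n+1) with hlt | hge
        · exact (hC i h1 (by omega) t).trans
            (mul_le_mul_of_nonneg_right (le_max_left _ _) hrpnn)
        · have hival : i.val = n + 1 := le_antisymm h2 hge
          have hnk : ((n:ℝ)) + 1 ≤ (k:ℝ) - 1 := by
            have h3 : n + 1 + 1 ≤ k := by omega
            have h4 : ((n:ℝ)) + 1 + 1 ≤ (k:ℝ) := by exact_mod_cast h3
            linarith
          have hγ2 : 2 ≤ γ := by rw [hγdef]; linarith [hβk, hnk]
          have hD0 : 0 ≤ D := by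
            rw [hDdef]; split_ifs
            · exact le_rfl
            · positivity
          have hDE : D ≤ (β - γ + 1) * E := by
            have hβγ : β - γ + 1 = (n:ℝ) := by rw [hγdef]; ring
            rw [hβγ, hDdef]
            split_ifs with hn
            · rw [hn]; simp
            · have hn1 : (1:ℝ) ≤ (n:ℝ) := by
                exact_mod_cast Nat.one_le_iff_ne_zero.2 hn
              have hEge : h * C * k ≤ E := by
                rw [hEdef]
                linarith [mul_nonneg hv00 (Real.rpow_nonneg hApos.le (β - (n:ℝ)))]
              calc h * C * (k:ℝ) ≤ E := hEge
                _ = 1 * E := (one_mul E).symm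
                _ ≤ (n:ℝ) * E := mul_le_mul_of_nonneg_right hn1 hE0
          have he00 : e i 0 ≤ E * A ^ (-(γ - 1)) := by
            have hg1 : γ - 1 = β - (n:ℝ) := by rw [hγdef]; ring
            have hone : A ^ (β - (n:ℝ)) * A ^ (-(β - (n:ℝ))) = 1 := by
              rw [← Real.rpow_add hApos]; simp
            have hv0eq : v0 = (v0 * A ^ (β - (n:ℝ))) * A ^ (-(β - (n:ℝ))) := by
              rw [mul_assoc, hone, mul_one]
            calc e i 0 ≤ v0 := hebd i 0
              _ = (v0 * A ^ (β - (n:ℝ))) * A ^ (-(β - (n:ℝ))) := hv0eq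
              _ ≤ E * A ^ (-(γ - 1)) := by
                  rw [hg1]
                  apply mul_le_mul_of_nonneg_right _ (Real.rpow_nonneg hApos.le _)
                  rw [hEdef]
                  have : (0:ℝ) ≤ h * C * k := by positivity
                  linarith
          have hstep : ∀ s : ℕ, e i (s+1) ≤ (1 - β/((s:ℝ)+A)) * e i s + D * ((s:ℝ)+A)^(-γ) := by
            intro s
            have hr := hrec i (by omega) s
            have hsA0 : (0:ℝ) < (s:ℝ) + A := by
              have : (0:ℝ) ≤ (s:ℝ) := Nat.cast_nonneg s
              linarith
            have hsA1 : (1:ℝ) ≤ (s:ℝ) + A := by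
              have : (0:ℝ) ≤ (s:ℝ) := Nat.cast_nonneg s
              linarith
            have hforce : h * ∑ j ∈ L i, e j s ≤ D * ((s:ℝ)+A)^(-γ) := by
              by_cases hn : n = 0
              · have hzero : ∀ j ∈ L i, e j s = 0 := by
                  intro j hj
                  have hjlt : j.val < i.val := Fin.lt_def.mp (hLlt i j hj)
                  exact hezero s j (by omega)
                rw [Finset.sum_eq_zero hzero, hDdef, if_pos hn]
                simp
              · have hjb : ∀ j ∈ L i, e j s ≤ C * ((s:ℝ)+A)^(-γ) := by
                  intro j hj
                  have hjlt : j.val < i.val := Fin.lt_def.mp (hLlt i j hj)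
                  rcases Nat.eq_zero_or_pos j.val with hj0 | hjpos
                  · rw [hezero s j hj0]; positivity
                  · refine (hC j hjpos (by omega) s).trans ?_
                    apply mul_le_mul_of_nonneg_left _ hC0
                    apply Real.rpow_le_rpow_of_exponent_le hsA1
                    have hjn : (j.val:ℝ) ≤ (n:ℝ) := by
                      exact_mod_cast (by omega : j.val ≤ n)
                    rw [hγdef]; linarith
                have hsum2 : ∑ j ∈ L i, e j s ≤ ((L i).card:ℝ) * (C * ((s:ℝ)+A)^(-γ)) := by
                  calc ∑ j ∈ L i, e j s ≤ ∑ _j ∈ L i, C * ((s:ℝ)+A)^(-γ) := sum_le_sum hjb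
                    _ = ((L i).card:ℝ) * (C * ((s:ℝ)+A)^(-γ)) := by
                        rw [sum_const, nsmul_eq_mul]
                have hcardk : ((L i).card : ℝ) ≤ (k:ℝ) := le_trans (hcard i) (by linarith)
                rw [hDdef, if_neg hn]
                have hrp : (0:ℝ) ≤ ((s:ℝ)+A)^(-γ) := Real.rpow_nonneg hsA0.le _
                have hkey := mul_le_mul_of_nonneg_right
                  (mul_le_mul_of_nonneg_left hcardk (mul_nonneg hh0.le hC0))
                  hrp
                have hmono := mul_le_mul_of_nonneg_left hsum2 hh0.le
                nlinarith [hmono, hkey]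
            linarith [hr, hforce]
          have hdec := flock_decay_lemma A β γ D E (fun s => e i s) hA1 hβA hγ2 hD0 hE0 hDE
            he00 hstep t
          have hexp : -(γ - 1) = -(β - (i.val:ℝ) + 1) := by
            rw [hγdef, hival]; push_cast; ring
          rw [← hexp] at hrpnn ⊢
          exact hdec.trans (mul_le_mul_of_nonneg_right (le_max_right _ _) hrpnn)
    -- summability of expected speeds
    obtain ⟨C, hC0, hC⟩ := main k
    set q : ℝ := β - (k:ℝ) + 2 with hqdef
    have hq1 : 1 < q := by rw [hqdef]; linarith [hβk]
    have hsumm : ∀ i : Fin k, Summable (fun t => e i t) := by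
      intro i
      rcases Nat.eq_zero_or_pos i.val with h0 | hpos
      · have hz : (fun t => e i t) = fun _ => (0:ℝ) := funext fun t => hezero t i h0
        rw [hz]; exact summable_zero
      · have hik : (i.val:ℝ) ≤ (k:ℝ) - 1 := by
          have h5 : i.val + 1 ≤ k := i.isLt
          have h6 : ((i.val:ℝ)) + 1 ≤ (k:ℝ) := by exact_mod_cast h5
          linarith
        have hqi : q ≤ β - (i.val:ℝ) + 1 := by rw [hqdef]; linarith
        have hbase : Summable (fun t : ℕ => ((t:ℝ)+1) ^ (-q)) := by
          have hs1 : Summable (fun t : ℕ => ((t:ℝ)) ^ (-q)) :=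
            Real.summable_nat_rpow.2 (by linarith)
          have hs2 := (summable_nat_add_iff 1).2 hs1
          exact hs2.congr fun t => by push_cast; ring_nf
        apply Summable.of_nonneg_of_le (fun t => henn i t) (fun t => ?_) (hbase.mul_left C)
        have htA0 : (0:ℝ) < (t:ℝ) + A := by
          have : (0:ℝ) ≤ (t:ℝ) := Nat.cast_nonneg t
          linarith
        have htA1 : (1:ℝ) ≤ (t:ℝ) + A := by
          have : (0:ℝ) ≤ (t:ℝ) := Nat.cast_nonneg t
          linarith
        calc e i t ≤ C * ((t:ℝ)+A) ^ (-(β - (i.val:ℝ)+1)) := hC i hpos (le_of_lt i.isLt) t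
          _ ≤ C * ((t:ℝ)+A) ^ (-q) := mul_le_mul_of_nonneg_left
              (Real.rpow_le_rpow_of_exponent_le htA1 (by linarith)) hC0
          _ ≤ C * ((t:ℝ)+1) ^ (-q) := mul_le_mul_of_nonneg_left
              (Real.rpow_le_rpow_of_nonpos (by positivity) (by linarith) (by linarith)) hC0
    -- almost sure summability of speeds
    have hae : ∀ᵐ ω ∂μ, ∀ i : Fin k, Summable (fun t => ‖v t ω i‖) := by
      rw [ae_all_iff]
      intro i
      have hmi : ∀ t : ℕ, Measurable[m0] (fun ω => ((‖v t ω i‖₊ : ℝ≥0∞))) :=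
        fun t => ((measurable_pi_apply i).comp (hvmeas0 t)).enorm
      have h1 : ∫⁻ ω, ∑' t, (‖v t ω i‖₊ : ℝ≥0∞) ∂μ
          = ∑' t, ∫⁻ ω, (‖v t ω i‖₊ : ℝ≥0∞) ∂μ :=
        lintegral_tsum (fun t => (hmi t).aemeasurable)
      have h2 : ∀ t : ℕ, ∫⁻ ω, (‖v t ω i‖₊ : ℝ≥0∞) ∂μ = ENNReal.ofReal (e i t) := by
        intro t
        rw [ofReal_integral_eq_lintegral_ofReal (hvint t i)
          (Eventually.of_forall fun ω => norm_nonneg _)]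
        simp only [ofReal_norm, enorm_eq_nnnorm]
      have h3 : ∫⁻ ω, ∑' t, (‖v t ω i‖₊ : ℝ≥0∞) ∂μ < ⊤ := by
        rw [h1]
        have h2' : ∑' t, ∫⁻ ω, (‖v t ω i‖₊ : ℝ≥0∞) ∂μ = ∑' t, ENNReal.ofReal (e i t) :=
          tsum_congr h2
        rw [h2', ← ENNReal.ofReal_tsum_of_nonneg (fun t => henn i t) (hsumm i)]
        exact ENNReal.ofReal_lt_top
      have h4 : ∀ᵐ ω ∂μ, ∑' t, (‖v t ω i‖₊ : ℝ≥0∞) < ⊤ :=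
        ae_lt_top (Measurable.ennreal_tsum hmi) h3.ne
      filter_upwards [h4] with ω hω
      have h5 : Summable (fun t => ‖v t ω i‖₊) :=
        ENNReal.tsum_coe_ne_top_iff_summable.1 hω.ne
      have h6 := NNReal.summable_coe.2 h5
      exact h6.congr fun t => coe_nnnorm _
    -- conclusion
    filter_upwards [hae] with ω hω
    have hvsum : ∀ i : Fin k, Summable (fun t => v t ω i) := fun i => (hω i).of_norm
    constructor
    · have hvten : Tendsto (fun t => v t ω) atTop (nhds 0) := by
        rw [tendsto_pi_nhds]
        intro i
        have := (hvsum i).tendsto_atTop_zero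
        simpa using this
      simpa using hvten.norm
    · have hxf : ∀ t : ℕ, x t ω = fun i => X0 i + ∑ s ∈ Finset.range t, h • v s ω i := by
        intro t
        induction t with
        | zero => funext i; simp [hX0 ω]
        | succ t ih =>
          funext i
          have hti := congrFun ih i
          rw [hxdyn t ω i, hti, Finset.sum_range_succ]
          abel
      have hsm : ∀ i : Fin k, Summable (fun s => h • v s ω i) :=
        fun i => (hvsum i).const_smul h
      refine ⟨fun i => X0 i + ∑' s, h • v s ω i, ?_⟩
      rw [tendsto_pi_nhds]
      intro i
      have h7 : Tendsto (fun t => ∑ s ∈ Finset.range t, h • v s ω i) atTop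
          (nhds (∑' s, h • v s ω i)) := (hsm i).hasSum.tendsto_sum_nat
      have h8 := (tendsto_const_nhds (x := X0 i) (f := atTop (α := ℕ))).add h7
      have h9 : (fun t : ℕ => x t ω i)
          = fun t : ℕ => X0 i + ∑ s ∈ Finset.range t, h • v s ω i :=
        funext fun t => congrFun (hxf t) i
      rw [h9]
      exact h8
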